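/- In the free algebra k⟨x₁, x₂, x₃⟩ with δ = x₁x₂ − x₂x₁ − 1: for any i, j ≥ 0, the left ideals A·(x₁x₂·x₂ⁱx₁ʲ) and A·(x₃·x₂ⁱx₁ʲ) intersect trivially, and consequently for all nonzero f₁, f₂ ∈ A, TIP(f₂·δ·x₂ⁱx₁ʲ) = TIP(f₂·x₁x₂·x₂ⁱx₁ʲ) ≠ TIP(f₁·x₃·x₂ⁱx₁ʲ), where TIP is the leading monomial for the degree order. -/

import Mathlib

noncomputable section

/-- The free algebra `k⟨x₁, x₂, x₃⟩`. -/
abbrev FA (k : Type) [Field k] := MonoidAlgebra k (FreeMonoid (Fin 3))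

/-- The generators: `X 0 = x₁`, `X 1 = x₂`, `X 2 = x₃`. -/
def X {k : Type} [Field k] (i : Fin 3) : FA k :=
  MonoidAlgebra.single (FreeMonoid.of i) 1

/-- Degree-vector list of a word: counts of the generators with the count of `x₃` first. -/
def dlist (w : FreeMonoid (Fin 3)) : List ℕ :=
  (List.ofFn fun i : Fin 3 => (FreeMonoid.toList w).count i).reverse

/-- The degree order: compare degree vectors right-lexicographically (count of `x₃` first),
then break ties by the right lexicographic word order with `1 ≺ x₁ ≺ x₂ ≺ x₃`. -/
instance degOrder : LinearOrder (FreeMonoid (Fin 3)) :=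
  LinearOrder.lift' (fun w => toLex (dlist w, (FreeMonoid.toList w).reverse))
    (fun a b h => by
      have h2 : (FreeMonoid.toList a).reverse = (FreeMonoid.toList b).reverse :=
        congrArg (fun p : Lex (List ℕ × List (Fin 3)) => (ofLex p).2) h
      exact FreeMonoid.toList.injective (List.reverse_injective h2))

/-- `TIP f`: the largest monomial occurring in `f` for the degree order, `TIP 0 = ⊥`. -/
def TIP {k : Type} [Field k] (f : FA k) : WithBot (FreeMonoid (Fin 3)) := f.coeff.support.max

/-!
Every word in the support of `f * single u 1` ends in `u`. Hence `A·(x₁x₂v)` and `A·(x₃v)` meet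
trivially, their elements being supported on words whose letter in front of `v` is `x₂`,
respectively `x₃`. The degree order is compatible with right multiplication, so
`TIP (f * u) = TIP f * u` for a word `u`; in `f·δ·v = f·x₁x₂v − f·x₂x₁v − f·v` the last two terms
lead with `TIP f·x₂x₁v` (same degree, smaller in the right-lexicographic tiebreak since `x₁ ≺ x₂`)
and `TIP f·v` (lower degree), both strictly below `TIP f·x₁x₂v`.
-/

open FreeMonoid MonoidAlgebra

lemma dlist_eq_counts (w : FreeMonoid (Fin 3)) :
    dlist w = [(toList w).count 2, (toList w).count 1, (toList w).count 0] := by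
  simp [dlist, List.ofFn_succ]

lemma degOrder_lt_iff {a b : FreeMonoid (Fin 3)} :
    a < b ↔ dlist a < dlist b ∨ dlist a = dlist b ∧ (toList a).reverse < (toList b).reverse :=
  Prod.Lex.lt_iff

instance degOrder_mulRightStrictMono : MulRightStrictMono (FreeMonoid (Fin 3)) where
  elim w a b h := by
    simp only [Function.swap, degOrder_lt_iff, dlist_eq_counts, List.cons_lt_cons_iff,
      List.not_lt_nil, and_false, or_false, List.cons.injEq, and_true, toList_mul,
      List.count_append, List.reverse_append] at h ⊢
    rcases h with h | ⟨h, hrev⟩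
    · omega
    · refine .inr ⟨by omega, ?_⟩
      exact (List.lt_iff_lex_lt _ _).2 (List.Lex.append_left _ ((List.lt_iff_lex_lt _ _).1 hrev) _)

lemma mul_of_ne_mul_of {α : Type*} {a b : α} (hab : a ≠ b) (u v : FreeMonoid α) :
    u * of a ≠ v * of b := fun h => by
  have := List.append_inj' (congrArg toList h) rfl
  simp_all

lemma mul_x₂x₁_lt_mul_x₁x₂ (u w : FreeMonoid (Fin 3)) :
    u * (of 1 * of 0) * w < u * (of 0 * of 1) * w := by
  refine mul_lt_mul_left (degOrder_lt_iff.2 (.inr ⟨?_, ?_⟩)) w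
  · simp [dlist_eq_counts, List.count_append]
  · simp [List.cons_lt_cons_iff]

lemma mul_lt_mul_x₁x₂ (u w : FreeMonoid (Fin 3)) : u * w < u * (of 0 * of 1) * w := by
  refine mul_lt_mul_left (degOrder_lt_iff.2 (.inl ?_)) w
  simp [dlist_eq_counts, List.cons_lt_cons_iff, List.count_append]

variable {k : Type} [Field k]

lemma support_mul_single_one (f : FA k) (u : FreeMonoid (Fin 3)) :
    (f * single u 1).coeff.support = f.coeff.support.image (· * u) :=
  support_coeff_mul_single_eq_image f (by simp) (IsRightRegular.all u)

lemma Finset.max_image_of_monotone {α β : Type*} [LinearOrder α] [LinearOrder β]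
    {g : α → β} (hg : Monotone g) (s : Finset α) : (s.image g).max = s.max.map g := by
  rcases s.eq_empty_or_nonempty with rfl | hs
  · simp
  · rw [← Finset.coe_max' hs, ← Finset.coe_max' (hs.image g), WithBot.map_coe,
      Finset.max'_image hg s (hs.image g)]

lemma TIP_mul_single_one (f : FA k) (u : FreeMonoid (Fin 3)) :
    TIP (f * single u 1) = (TIP f).map (· * u) := by
  rw [TIP, TIP, support_mul_single_one, Finset.max_image_of_monotone mul_left_strictMono.monotone]

lemma TIP_eq_coe_of_ne_zero {f : FA k} (hf : f ≠ 0) : ∃ m : FreeMonoid (Fin 3), TIP f = m :=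
  Finset.max_of_nonempty (Finsupp.support_nonempty_iff.2 (coeff_eq_zero.not.2 hf))

lemma TIP_sub_of_lt {p q : FA k} (h : TIP q < TIP p) : TIP (p - q) = TIP p := by
  obtain ⟨m, hm⟩ : ∃ m : FreeMonoid (Fin 3), TIP p = m := by
    cases hp : TIP p with
    | bot => simp [hp] at h
    | coe m => exact ⟨m, rfl⟩
  have hmq : q.coeff m = 0 := Finsupp.notMem_support_iff.1 fun hq =>
    (Finset.le_max hq).not_gt (hm ▸ h)
  have hmp : m ∈ (p - q).coeff.support := by
    rw [Finsupp.mem_support_iff, coeff_sub, Finsupp.sub_apply, hmq, sub_zero]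
    exact Finsupp.mem_support_iff.1 (Finset.mem_of_max hm)
  refine le_antisymm ?_ (hm ▸ Finset.le_max hmp)
  calc TIP (p - q) ≤ TIP p ⊔ TIP q := by
        rw [TIP, TIP, TIP, ← Finset.max_union, coeff_sub]
        exact Finset.max_mono Finsupp.support_sub
    _ = TIP p := sup_of_le_left h.le

lemma span_single_inf_span_single_eq_bot {a b : FreeMonoid (Fin 3)} (h : ∀ c d, c * a ≠ d * b) :
    Submodule.span (FA k) {single a (1 : k)} ⊓ Submodule.span (FA k) {single b 1} = ⊥ := by
  refine (Submodule.eq_bot_iff _).2 fun x hx => ?_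
  rw [Submodule.mem_inf, Submodule.mem_span_singleton, Submodule.mem_span_singleton] at hx
  obtain ⟨⟨r, rfl⟩, s, hrs⟩ := hx
  by_contra hx
  obtain ⟨u, hu⟩ := Finsupp.support_nonempty_iff.2 (coeff_eq_zero.not.2 hx)
  have hu' := hu
  rw [← hrs] at hu'
  simp only [smul_eq_mul, support_mul_single_one, Finset.mem_image] at hu hu'
  obtain ⟨c, -, rfl⟩ := hu
  obtain ⟨d, -, hd⟩ := hu'
  exact h c d hd.symm

lemma X_mul_single_one (a : Fin 3) (w : FreeMonoid (Fin 3)) :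
    X a * single w (1 : k) = single (of a * w) 1 := by
  simp [X, single_mul_single]

lemma TIP_mul_delta_mul_single (f : FA k) (w : FreeMonoid (Fin 3)) :
    TIP (f * (X 0 * X 1 - X 1 * X 0 - 1) * single w 1) = TIP (f * (X 0 * X 1) * single w 1) := by
  rcases eq_or_ne f 0 with rfl | hf
  · simp
  obtain ⟨m, hm⟩ := TIP_eq_coe_of_ne_zero hf
  have expand : f * (X 0 * X 1 - X 1 * X 0 - 1) * single w 1 =
      f * single (of 0 * of 1 * w) 1 - f * single (of 1 * of 0 * w) 1 - f * single w 1 := by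
    simp only [mul_sub, sub_mul, one_mul, mul_assoc, X_mul_single_one]
  have hlt_x₂x₁ : TIP (f * single (of 1 * of 0 * w) 1) < TIP (f * single (of 0 * of 1 * w) 1) := by
    simpa [TIP_mul_single_one, hm, ← mul_assoc] using mul_x₂x₁_lt_mul_x₁x₂ m w
  have hlt_one : TIP (f * single w 1) < TIP (f * single (of 0 * of 1 * w) 1) := by
    simpa [TIP_mul_single_one, hm, ← mul_assoc] using mul_lt_mul_x₁x₂ m w
  rw [expand, TIP_sub_of_lt (by rwa [TIP_sub_of_lt hlt_x₂x₁]), TIP_sub_of_lt hlt_x₂x₁]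
  simp only [mul_assoc, X_mul_single_one]

lemma mul_x₁x₂_mul_ne_mul_x₃_mul (c d w : FreeMonoid (Fin 3)) :
    c * (of 0 * (of 1 * w)) ≠ d * (of 2 * w) := by
  simp only [← mul_assoc]
  exact fun h => mul_of_ne_mul_of (by decide) (c * of 0) d (mul_right_cancel h)

/-- In `k⟨x₁, x₂, x₃⟩` with `δ = x₁x₂ − x₂x₁ − 1`: for any `i, j ≥ 0` and
`v = x₂ⁱx₁ʲ`, the left ideals `A·(x₁x₂·v)` and `A·(x₃·v)` intersect trivially, and
consequently for all nonzero `f₁, f₂ ∈ A`,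
`TIP (f₂·δ·v) = TIP (f₂·x₁x₂·v) ≠ TIP (f₁·x₃·v)` for the degree order. -/
theorem stmt16 (k : Type) [Field k]
    (δ : FA k) (hδ : δ = X 0 * X 1 - X 1 * X 0 - 1)
    (i j : ℕ) (v : FA k) (hv : v = (X 1) ^ i * (X 0) ^ j) :
    (Submodule.span (FA k) {X 0 * X 1 * v} ⊓ Submodule.span (FA k) {X 2 * v}
      = (⊥ : Submodule (FA k) (FA k))) ∧
    (∀ f₁ f₂ : FA k, f₁ ≠ 0 → f₂ ≠ 0 →
      TIP (f₂ * δ * v) = TIP (f₂ * (X 0 * X 1) * v) ∧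
      TIP (f₂ * δ * v) ≠ TIP (f₁ * X 2 * v)) := by
  obtain ⟨w, rfl⟩ : ∃ w, v = single w 1 :=
    ⟨of 1 ^ i * of 0 ^ j, by simp [hv, X, single_pow, single_mul_single]⟩
  subst hδ
  refine ⟨?_, fun f₁ f₂ hf₁ hf₂ => ⟨TIP_mul_delta_mul_single f₂ w, ?_⟩⟩
  · simp only [mul_assoc, X_mul_single_one]
    exact span_single_inf_span_single_eq_bot (mul_x₁x₂_mul_ne_mul_x₃_mul · · w)
  · obtain ⟨m₁, hm₁⟩ := TIP_eq_coe_of_ne_zero hf₁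
    obtain ⟨m₂, hm₂⟩ := TIP_eq_coe_of_ne_zero hf₂
    rw [TIP_mul_delta_mul_single]
    simp only [mul_assoc, X_mul_single_one, TIP_mul_single_one, hm₁, hm₂, WithBot.map_coe,
      ne_eq, WithBot.coe_inj]
    exact mul_x₁x₂_mul_ne_mul_x₃_mul m₂ m₁ w
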